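/- Let q^{(N)} be the harmonic prior on R^{3N} with density proportional to exp(-(α/2) Σ_{i=1}^{N-1} ||x_i - x_{i+1}||²) (viewed as a density on the quotient by global translation, or with one coordinate fixed at the origin). Then for any M ≤ N and index i, the marginal distribution of the contiguous crop (x_i, ..., x_{i+M-1}) under q^{(N)} equals (up to a global translation) the harmonic prior q^{(M)} on R^{3M}. -/
import Mathlib

open MeasureTheory Real ENNReal

noncomputable section

/-- The harmonic chain energy `Σ_{j=1}^{N-1} ‖x_j - x_{j+1}‖²` of `N` points in `ℝ³`
(the harmonic prior `q^{(N)}` has density proportional to `exp(-(α/2)·chainEnergy)`). -/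
def chainEnergy (N : ℕ) (x : Fin N → EuclideanSpace ℝ (Fin 3)) : ℝ :=
  ∑ j : Fin (N - 1), ‖x ⟨j, by omega⟩ - x ⟨(j : ℕ) + 1, by omega⟩‖ ^ 2

/-- Assemble a full configuration of `N` points from a crop `y` occupying indices
`[i, i+M)`, together with the points `z` before the crop and `w` after the crop. -/
def glue (N M i : ℕ) (h : i + M ≤ N) (y : Fin M → EuclideanSpace ℝ (Fin 3))
    (z : Fin i → EuclideanSpace ℝ (Fin 3))
    (w : Fin (N - (i + M)) → EuclideanSpace ℝ (Fin 3)) : Fin N → EuclideanSpace ℝ (Fin 3) :=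
  fun k =>
    if hk : (k : ℕ) < i then z ⟨k, hk⟩
    else if hk2 : (k : ℕ) < i + M then y ⟨(k : ℕ) - i, by omega⟩
    else w ⟨(k : ℕ) - (i + M), by omega⟩

namespace HarmonicCropAux

abbrev E3 := EuclideanSpace ℝ (Fin 3)

/-- Totalization of a `Fin n`-indexed family, with default `a`. -/
def ext (n : ℕ) (z : Fin n → E3) (a : E3) (j : ℕ) : E3 :=
  if h : j < n then z ⟨j, h⟩ else a

/-- Energy of a chain of `n` points anchored at `a` after the last point
(free at the beginning). -/
def La (n : ℕ) (a : E3) (z : Fin n → E3) : ℝ :=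
  ∑ j ∈ Finset.range n, ‖ext n z a j - ext n z a (j + 1)‖ ^ 2

lemma chainEnergy_eq (N : ℕ) (x : Fin N → E3) :
    chainEnergy N x = ∑ j ∈ Finset.range (N - 1),
      ‖ext N x 0 j - ext N x 0 (j + 1)‖ ^ 2 := by
  rw [chainEnergy, ← Fin.sum_univ_eq_sum_range]
  refine Finset.sum_congr rfl fun j _ => ?_
  have hj := j.2
  have h1 : (j : ℕ) < N := by omega
  have h2 : (j : ℕ) + 1 < N := by omega
  rw [ext, ext, dif_pos h1, dif_pos h2]

lemma ext_tail (n : ℕ) (z : Fin (n + 1) → E3) (a : E3) (j : ℕ) :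
    ext n (Fin.tail z) a j = ext (n + 1) z a (j + 1) := by
  unfold ext
  by_cases h : j < n
  · rw [dif_pos h, dif_pos (by omega : j + 1 < n + 1)]
    rfl
  · rw [dif_neg h, dif_neg (by omega)]

lemma La_succ (n : ℕ) (a : E3) (z : Fin (n + 1) → E3) :
    La (n + 1) a z = ‖z 0 - ext n (Fin.tail z) a 0‖ ^ 2 + La n a (Fin.tail z) := by
  have h0 : ext (n + 1) z a 0 = z 0 := by simp [ext]
  rw [La, Finset.sum_range_succ', h0]
  simp only [La, ext_tail]
  ring

lemma measurable_La (n : ℕ) (a : E3) : Measurable (La n a) := by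
  unfold La
  apply Finset.measurable_sum
  intro j _
  by_cases h1 : j < n <;> by_cases h2 : j + 1 < n <;>
    · simp only [ext, h1, h2, dif_pos, dif_neg, not_false_iff]
      measurability

lemma measurable_ext0 (n : ℕ) (a : E3) : Measurable fun t : Fin n → E3 => ext n t a 0 := by
  unfold ext
  by_cases h : 0 < n
  · simp only [h, dif_pos]
    exact measurable_pi_apply _
  · simp only [h, dif_neg, not_false_iff]
    exact measurable_const

/-- The basic Gaussian on `E3`. -/
def gauss (α : ℝ) (u : E3) : ℝ≥0∞ := ENNReal.ofReal (Real.exp (-(α / 2) * ‖u‖ ^ 2))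

def κ (α : ℝ) : ℝ≥0∞ := ∫⁻ u : E3, gauss α u

lemma integrable_gauss {α : ℝ} (hα : 0 < α) :
    Integrable (fun v : E3 => Real.exp (-(α / 2) * ‖v‖ ^ 2)) := by
  have h := (GaussianFourier.integrable_cexp_neg_mul_sq_norm_add
    (b := ((α / 2 : ℝ) : ℂ)) (by simpa using half_pos hα) 0 (0 : E3)).norm
  simpa [Complex.norm_exp, ← Complex.ofReal_pow] using h

lemma κ_eq {α : ℝ} (hα : 0 < α) :
    κ α = ENNReal.ofReal (∫ u : E3, Real.exp (-(α / 2) * ‖u‖ ^ 2)) := by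
  rw [κ]
  exact (ofReal_integral_eq_lintegral_ofReal (integrable_gauss hα)
    (Filter.Eventually.of_forall fun x => (Real.exp_pos _).le)).symm

lemma κ_ne_top {α : ℝ} (hα : 0 < α) : κ α ≠ ⊤ := by
  rw [κ_eq hα]; exact ENNReal.ofReal_ne_top

lemma κ_toReal_pos {α : ℝ} (hα : 0 < α) : 0 < (κ α).toReal := by
  rw [κ_eq hα,
    ENNReal.toReal_ofReal (integral_nonneg fun u => (Real.exp_pos _).le),
    GaussianFourier.integral_rexp_neg_mul_sq_norm (half_pos hα)]
  positivity

lemma measurable_integrand {α : ℝ} (n : ℕ) (a : E3) :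
    Measurable fun z : Fin n → E3 => ENNReal.ofReal (Real.exp (-(α / 2) * La n a z)) :=
  Measurable.ennreal_ofReal <|
    Real.continuous_exp.measurable.comp ((measurable_La n a).const_mul _)

lemma lintegral_La {α : ℝ} (hα : 0 < α) (n : ℕ) (a : E3) :
    ∫⁻ z : (Fin n → E3), ENNReal.ofReal (Real.exp (-(α / 2) * La n a z)) = κ α ^ n := by
  induction n generalizing a with
  | zero =>
      have hL : ∀ z : Fin 0 → E3, La 0 a z = 0 := fun z => by simp [La]
      simp only [hL, mul_zero, Real.exp_zero, ENNReal.ofReal_one, pow_zero]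
      rw [lintegral_one, volume_pi, Measure.pi_univ]
      simp
  | succ n ih =>
      have hmp := (MeasureTheory.volume_preserving_piFinSuccAbove
        (fun _ : Fin (n + 1) => E3) 0).symm
      rw [← hmp.lintegral_comp (measurable_integrand (n + 1) a)]
      have hG : Measurable fun p : E3 × (Fin n → E3) =>
          ENNReal.ofReal (Real.exp (-(α / 2) * ‖p.1 - ext n p.2 a 0‖ ^ 2)) := by
        apply Measurable.ennreal_ofReal
        apply Real.continuous_exp.measurable.comp
        apply Measurable.const_mul
        exact (measurable_fst.sub ((measurable_ext0 n a).comp measurable_snd)).norm.pow_const 2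
      have key : ∀ p : E3 × (Fin n → E3),
          ENNReal.ofReal (Real.exp (-(α / 2) *
            La (n + 1) a ((MeasurableEquiv.piFinSuccAbove (fun _ : Fin (n + 1) => E3) 0).symm p)))
          = ENNReal.ofReal (Real.exp (-(α / 2) * ‖p.1 - ext n p.2 a 0‖ ^ 2)) *
            ENNReal.ofReal (Real.exp (-(α / 2) * La n a p.2)) := by
        rintro ⟨x, t⟩
        have hz : (MeasurableEquiv.piFinSuccAbove (fun _ : Fin (n + 1) => E3) 0).symm (x, t)
            = Fin.cons x t := by
          funext j
          simp [MeasurableEquiv.piFinSuccAbove, Fin.insertNth_zero]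
        rw [hz, La_succ, Fin.cons_zero, Fin.tail_cons, mul_add, Real.exp_add,
          ENNReal.ofReal_mul (Real.exp_pos _).le]
      simp only [key]
      have hAE : AEMeasurable (fun p : E3 × (Fin n → E3) =>
          ENNReal.ofReal (Real.exp (-(α / 2) * ‖p.1 - ext n p.2 a 0‖ ^ 2)) *
            ENNReal.ofReal (Real.exp (-(α / 2) * La n a p.2)))
          ((volume : Measure E3).prod (volume : Measure (Fin n → E3))) :=
        (hG.mul ((measurable_integrand n a).comp measurable_snd)).aemeasurable
      rw [Measure.volume_eq_prod, lintegral_prod_symm _ hAE]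
      have inner : ∀ t : Fin n → E3,
          (∫⁻ x : E3, ENNReal.ofReal (Real.exp (-(α / 2) * ‖x - ext n t a 0‖ ^ 2))) = κ α := by
        intro t
        have h := lintegral_add_right_eq_self (μ := (volume : Measure E3))
          (fun u => gauss α u) (-(ext n t a 0))
        calc ∫⁻ x : E3, ENNReal.ofReal (Real.exp (-(α / 2) * ‖x - ext n t a 0‖ ^ 2))
            = ∫⁻ x : E3, gauss α (x + -(ext n t a 0)) := by
              apply lintegral_congr; intro x; rw [gauss, ← sub_eq_add_neg]
          _ = κ α := h
      calc ∫⁻ t : (Fin n → E3), ∫⁻ x : E3,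
            ENNReal.ofReal (Real.exp (-(α / 2) * ‖x - ext n t a 0‖ ^ 2)) *
              ENNReal.ofReal (Real.exp (-(α / 2) * La n a t))
          = ∫⁻ t : (Fin n → E3), κ α * ENNReal.ofReal (Real.exp (-(α / 2) * La n a t)) := by
            apply lintegral_congr; intro t
            rw [lintegral_mul_const _ (by
              apply Measurable.ennreal_ofReal
              exact Real.continuous_exp.measurable.comp
                (((measurable_id.sub_const _).norm.pow_const 2).const_mul _)), inner t]
        _ = κ α * κ α ^ n := by rw [lintegral_const_mul _ (measurable_integrand n a), ih]
        _ = κ α ^ (n + 1) := by ring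

end HarmonicCropAux

namespace HarmonicCropAux

lemma lintegral_rev (k : ℕ) (F : (Fin k → E3) → ℝ≥0∞) (hF : Measurable F) :
    ∫⁻ w : (Fin k → E3), F (fun j => w (Fin.rev j)) = ∫⁻ v, F v := by
  have hmp := volume_measurePreserving_piCongrLeft (fun _ : Fin k => E3) (Fin.revPerm (n := k))
  rw [← hmp.lintegral_comp hF]
  apply lintegral_congr; intro w
  congr 1
  funext j
  simp [MeasurableEquiv.piCongrLeft, Equiv.piCongrLeft]

lemma ext_glue (N M i : ℕ) (hM : 0 < M) (h : i + M ≤ N) (y : Fin M → E3) (z : Fin i → E3)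
    (w : Fin (N - (i + M)) → E3) (j : ℕ) (hj : j < N) :
    ext N (glue N M i h y z w) 0 j =
      if h1 : j < i then z ⟨j, h1⟩
      else if h2 : j < i + M then y ⟨j - i, by omega⟩
      else w ⟨j - (i + M), by omega⟩ := by
  rw [ext, dif_pos hj]; rfl

lemma chain_glue (N M i : ℕ) (hM : 0 < M) (h : i + M ≤ N)
    (y : Fin M → E3) (z : Fin i → E3) (w : Fin (N - (i + M)) → E3) :
    chainEnergy N (glue N M i h y z w)
      = La i (y ⟨0, hM⟩) z + chainEnergy M y
        + La (N - (i + M)) (y ⟨M - 1, by omega⟩) (fun j => w (Fin.rev j)) := by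
  have hN1 : N - 1 = i + ((M - 1) + (N - (i + M))) := by omega
  rw [chainEnergy_eq, hN1, Finset.sum_range_add, Finset.sum_range_add, ← add_assoc]
  have hA : ∑ j ∈ Finset.range i,
      ‖ext N (glue N M i h y z w) 0 j - ext N (glue N M i h y z w) 0 (j + 1)‖ ^ 2
      = La i (y ⟨0, hM⟩) z := by
    rw [La]
    refine Finset.sum_congr rfl fun j hj => ?_
    rw [Finset.mem_range] at hj
    rw [ext_glue N M i hM h y z w j (show j < N by omega), ext_glue N M i hM h y z w (j + 1) (show j + 1 < N by omega),
      ext, ext, dif_pos hj, dif_pos hj]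
    by_cases hji : j + 1 < i
    · rw [dif_pos hji, dif_pos hji]
    · rw [dif_neg hji, dif_neg hji, dif_pos (show j + 1 < i + M by omega)]
      congr 2
      exact congrArg₂ (· - · : E3 → E3 → E3) rfl (congrArg y (Fin.ext (by simp only [Fin.val_rev, Fin.val_mk]; omega)))
  have hB : ∑ x ∈ Finset.range (M - 1),
      ‖ext N (glue N M i h y z w) 0 (i + x) - ext N (glue N M i h y z w) 0 (i + x + 1)‖ ^ 2
      = chainEnergy M y := by
    rw [chainEnergy_eq]
    refine Finset.sum_congr rfl fun x hx => ?_
    rw [Finset.mem_range] at hx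
    rw [ext_glue N M i hM h y z w (i + x) (show i + x < N by omega),
      ext_glue N M i hM h y z w (i + x + 1) (show i + x + 1 < N by omega),
      dif_neg (show ¬ i + x < i by omega), dif_pos (show i + x < i + M by omega),
      dif_neg (show ¬ i + x + 1 < i by omega), dif_pos (show i + x + 1 < i + M by omega),
      ext, ext, dif_pos (show x < M by omega), dif_pos (show x + 1 < M by omega)]
    congr 2
    exact congrArg₂ (· - · : E3 → E3 → E3) (congrArg y (Fin.ext (by simp only [Fin.val_rev, Fin.val_mk]; omega)))
      (congrArg y (Fin.ext (by simp only [Fin.val_rev, Fin.val_mk]; omega)))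
  have hC : ∑ x ∈ Finset.range (N - (i + M)),
      ‖ext N (glue N M i h y z w) 0 (i + (M - 1 + x))
        - ext N (glue N M i h y z w) 0 (i + (M - 1 + x) + 1)‖ ^ 2
      = La (N - (i + M)) (y ⟨M - 1, by omega⟩) (fun j => w (Fin.rev j)) := by
    rw [La, ← Finset.sum_range_reflect
      (fun x => ‖ext N (glue N M i h y z w) 0 (i + (M - 1 + x))
        - ext N (glue N M i h y z w) 0 (i + (M - 1 + x) + 1)‖ ^ 2) (N - (i + M))]
    refine Finset.sum_congr rfl fun x hx => ?_
    rw [Finset.mem_range] at hx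
    rw [ext_glue N M i hM h y z w (i + (M - 1 + (N - (i + M) - 1 - x))) (show i + (M - 1 + (N - (i + M) - 1 - x)) < N by omega),
      ext_glue N M i hM h y z w (i + (M - 1 + (N - (i + M) - 1 - x)) + 1) (show i + (M - 1 + (N - (i + M) - 1 - x)) + 1 < N by omega),
      dif_neg (show ¬ i + (M - 1 + (N - (i + M) - 1 - x)) < i by omega),
      dif_neg (show ¬ i + (M - 1 + (N - (i + M) - 1 - x)) + 1 < i by omega),
      dif_neg (show ¬ i + (M - 1 + (N - (i + M) - 1 - x)) + 1 < i + M by omega),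
      ext, ext, dif_pos (show x < N - (i + M) by omega)]
    rw [norm_sub_rev]
    by_cases hx1 : x + 1 < N - (i + M)
    · rw [dif_pos hx1, dif_neg (show ¬ i + (M - 1 + (N - (i + M) - 1 - x)) < i + M by omega)]
      congr 2
      exact congrArg₂ (· - · : E3 → E3 → E3)
        (congrArg w (Fin.ext (by simp only [Fin.val_rev, Fin.val_mk]; omega)))
        (congrArg w (Fin.ext (by simp only [Fin.val_rev, Fin.val_mk]; omega)))
    · rw [dif_neg hx1, dif_pos (show i + (M - 1 + (N - (i + M) - 1 - x)) < i + M by omega)]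
      congr 2
      exact congrArg₂ (· - · : E3 → E3 → E3)
        (congrArg w (Fin.ext (by simp only [Fin.val_rev, Fin.val_mk]; omega)))
        (congrArg y (Fin.ext (by simp only [Fin.val_rev, Fin.val_mk]; omega)))
  rw [hA, hB, hC]

end HarmonicCropAux

open HarmonicCropAux in
/-- the marginal of the harmonic prior `q^{(N)}` over a contiguous crop of
length `M` equals (up to a global translation, i.e. as translation-invariant densities) the
harmonic prior `q^{(M)}`: integrating the unnormalized density
`exp(-(α/2) Σ ‖x_j - x_{j+1}‖²)` over the non-crop variables yields a positive constant
times `exp(-(α/2) Σ ‖y_j - y_{j+1}‖²)`. -/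
theorem harmonic_prior_crop_marginal (α : ℝ) (hα : 0 < α)
    (N M i : ℕ) (hM : 0 < M) (h : i + M ≤ N) :
    ∃ c : ℝ, 0 < c ∧ ∀ y : Fin M → EuclideanSpace ℝ (Fin 3),
      (∫ zw : (Fin i → EuclideanSpace ℝ (Fin 3)) ×
              (Fin (N - (i + M)) → EuclideanSpace ℝ (Fin 3)),
          Real.exp (-(α / 2) * chainEnergy N (glue N M i h y zw.1 zw.2)))
        = c * Real.exp (-(α / 2) * chainEnergy M y) := by
  refine ⟨(κ α).toReal ^ i * (κ α).toReal ^ (N - (i + M)),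
    mul_pos (pow_pos (κ_toReal_pos hα) i) (pow_pos (κ_toReal_pos hα) (N - (i + M))), fun y => ?_⟩
  set a₁ : E3 := y ⟨0, hM⟩ with ha₁
  set a₂ : E3 := y ⟨M - 1, by omega⟩ with ha₂
  have hfun : (fun zw : (Fin i → E3) × (Fin (N - (i + M)) → E3) =>
      Real.exp (-(α / 2) * chainEnergy N (glue N M i h y zw.1 zw.2)))
      = fun zw => Real.exp (-(α / 2) * chainEnergy M y) *
          (Real.exp (-(α / 2) * La i a₁ zw.1) *
            Real.exp (-(α / 2) * La (N - (i + M)) a₂ (fun j => zw.2 (Fin.rev j)))) := by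
    funext zw
    rw [chain_glue N M i hM h y zw.1 zw.2, ← Real.exp_add, ← Real.exp_add]
    congr 1
    ring
  rw [hfun, MeasureTheory.integral_const_mul, Measure.volume_eq_prod,
    MeasureTheory.integral_prod_mul
      (f := fun z : Fin i → E3 => Real.exp (-(α / 2) * La i a₁ z))
      (g := fun w : Fin (N - (i + M)) → E3 =>
        Real.exp (-(α / 2) * La (N - (i + M)) a₂ (fun j => w (Fin.rev j))))]
  have hg : ∫ z : Fin i → E3, Real.exp (-(α / 2) * La i a₁ z) = (κ α).toReal ^ i := by
    rw [MeasureTheory.integral_eq_lintegral_of_nonneg_ae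
        (Filter.Eventually.of_forall fun z => (Real.exp_pos _).le)
        (Real.continuous_exp.measurable.comp
          ((measurable_La i a₁).const_mul _)).aestronglyMeasurable,
      lintegral_La hα i a₁, ← ENNReal.toReal_pow]
  have hh : ∫ w : Fin (N - (i + M)) → E3,
      Real.exp (-(α / 2) * La (N - (i + M)) a₂ (fun j => w (Fin.rev j)))
      = (κ α).toReal ^ (N - (i + M)) := by
    have hm : Measurable fun w : Fin (N - (i + M)) → E3 =>
        La (N - (i + M)) a₂ (fun j => w (Fin.rev j)) :=
      (measurable_La _ a₂).comp
        (measurable_pi_lambda _ fun j => measurable_pi_apply _)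
    rw [MeasureTheory.integral_eq_lintegral_of_nonneg_ae
        (Filter.Eventually.of_forall fun w => (Real.exp_pos _).le)
        (Real.continuous_exp.measurable.comp (hm.const_mul _)).aestronglyMeasurable]
    have := lintegral_rev (N - (i + M))
      (fun v => ENNReal.ofReal (Real.exp (-(α / 2) * La (N - (i + M)) a₂ v)))
      (measurable_integrand _ a₂)
    rw [this, lintegral_La hα _ a₂, ← ENNReal.toReal_pow]
  rw [hg, hh]
  ring
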